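/- arXiv:2205.08017 — 2 statements merged into one kernel-verified Lean document; each statement's English description precedes it below -/
import Mathlib

section
/- Linear estimation error bound under Massart's noise for quadratic, logistic and exponential losses over all measurable functions: Let β∈(0,1/2], let H_all be the set of all measurable functions X→ℝ, and let D be a distribution over X×Y satisfying Massart's noise condition with constant β. Let (Φ, T) be one of the pairs: Φ_quad(t)=(1−t)²·1_{t≤1} with T(t)=t²; Φ_log(t)=log₂(1+e^{−t}) with T(t)=((t+1)/2)·log₂(t+1)+((1−t)/2)·log₂(1−t); Φ_exp(t)=e^{−t} with T(t)=1−√(1−t²). Then for every measurable h:X→ℝ such that R_{ℓ_Φ}(h) ≤ R*_{ℓ_Φ,H_all} + T(2β), one has R_{ℓ_{0-1}}(h) − R*_{ℓ_{0-1},H_all} ≤ 2β·(R_{ℓ_Φ}(h) − R*_{ℓ_Φ,H_all})/T(2β). -/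
open MeasureTheory Set

noncomputable section

/-- Conditional `ℓ`-risk of `h` at `x` with conditional probability level `t`. -/
def condRiskT {X : Type*} (ℓ : (X → ℝ) → X → ℝ → ℝ) (h : X → ℝ) (x : X) (t : ℝ) : ℝ :=
  t * ℓ h x 1 + (1 - t) * ℓ h x (-1)

/-- Conditional `ℓ`-risk of `h` at `x`. -/
def condRisk {X : Type*} (ℓ : (X → ℝ) → X → ℝ → ℝ) (η : X → ℝ) (h : X → ℝ) (x : X) : ℝ :=
  condRiskT ℓ h x (η x)

/-- Minimal conditional `ℓ`-risk over the hypothesis set `H` at `x`. -/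
def condRiskStar {X : Type*} (ℓ : (X → ℝ) → X → ℝ → ℝ) (η : X → ℝ) (H : Set (X → ℝ))
    (x : X) : ℝ :=
  sInf ((fun h => condRisk ℓ η h x) '' H)

/-- `ΔC_{ℓ,H}(h,x)`. -/
def deltaC {X : Type*} (ℓ : (X → ℝ) → X → ℝ → ℝ) (η : X → ℝ) (H : Set (X → ℝ))
    (h : X → ℝ) (x : X) : ℝ :=
  condRisk ℓ η h x - condRiskStar ℓ η H x

/-- `ΔC_{ℓ,H}(h,x,t)`. -/
def deltaCT {X : Type*} (ℓ : (X → ℝ) → X → ℝ → ℝ) (H : Set (X → ℝ))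
    (h : X → ℝ) (x : X) (t : ℝ) : ℝ :=
  condRiskT ℓ h x t - sInf ((fun h' => condRiskT ℓ h' x t) '' H)

/-- Generalization error `R_ℓ(h)`. -/
def genErr {X : Type*} [MeasurableSpace X] (μ : Measure X)
    (ℓ : (X → ℝ) → X → ℝ → ℝ) (η : X → ℝ) (h : X → ℝ) : ℝ :=
  ∫ x, condRisk ℓ η h x ∂μ

/-- Best-in-class error `R*_{ℓ,H}`. -/
def bestErr {X : Type*} [MeasurableSpace X] (μ : Measure X)
    (ℓ : (X → ℝ) → X → ℝ → ℝ) (η : X → ℝ) (H : Set (X → ℝ)) : ℝ :=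
  sInf ((fun h => genErr μ ℓ η h) '' H)

/-- Minimizability gap `M_{ℓ,H}`. -/
def minGap {X : Type*} [MeasurableSpace X] (μ : Measure X)
    (ℓ : (X → ℝ) → X → ℝ → ℝ) (η : X → ℝ) (H : Set (X → ℝ)) : ℝ :=
  bestErr μ ℓ η H - ∫ x, condRiskStar ℓ η H x ∂μ

/-- `ε`-truncation `⟨t⟩_ε = t · 1_{t > ε}`. -/
def trunc (ε t : ℝ) : ℝ := if ε < t then t else 0

/-- sign function: `+1` if `α ≥ 0`, `−1` otherwise. -/
def sgn (a : ℝ) : ℝ := if 0 ≤ a then 1 else -1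

/-- The zero-one loss `ℓ_{0-1}(h,x,y) = 1_{sign(h(x)) ≠ y}`. -/
def loss01 {X : Type*} (h : X → ℝ) (x : X) (y : ℝ) : ℝ :=
  if sgn (h x) ≠ y then 1 else 0

/-- Margin-based loss `ℓ_Φ(h,x,y) = Φ(y h(x))`. -/
def marginLoss {X : Type*} (Φ : ℝ → ℝ) (h : X → ℝ) (x : X) (y : ℝ) : ℝ :=
  Φ (y * h x)

end

section AuxLemmas
open MeasureTheory Set Real

lemma condRisk01_eq {X : Type*} (η : X → ℝ) (g : X → ℝ) (x : X) :
    condRisk loss01 η g x = if 0 ≤ g x then 1 - η x else η x := by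
  simp only [condRisk, condRiskT, loss01, sgn]
  by_cases hx : 0 ≤ g x <;> simp [hx] <;> norm_num

lemma condRiskPhi_eq {X : Type*} (Φ : ℝ → ℝ) (η : X → ℝ) (g : X → ℝ) (x : X) :
    condRisk (marginLoss Φ) η g x = η x * Φ (g x) + (1 - η x) * Φ (-(g x)) := by
  simp [condRisk, condRiskT, marginLoss]

end AuxLemmas
section MainAux
open MeasureTheory Set Real

lemma min_le_condRisk01 {X : Type*} (η : X → ℝ) (hη01 : ∀ x, η x ∈ Icc (0:ℝ) 1)
    (g : X → ℝ) (x : X) : min (η x) (1 - η x) ≤ condRisk loss01 η g x := by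
  rw [condRisk01_eq]
  by_cases hx : 0 ≤ g x <;> simp [hx, min_le_left, min_le_right]

lemma massart_aux
    {X : Type*} [MeasurableSpace X] [Nonempty X]
    (β : ℝ) (hβ0 : 0 < β) (hβ2 : β ≤ 1/2)
    (μ : Measure X) [IsProbabilityMeasure μ]
    (η : X → ℝ) (hηmeas : Measurable η) (hη01 : ∀ x, η x ∈ Icc (0:ℝ) 1)
    (hMassart : ∀ᵐ x ∂μ, β ≤ |η x - 1/2|)
    (Φ T : ℝ → ℝ) (F : ℝ → ℝ) (hFmeas : Measurable F)
    (hFbd : ∀ t ∈ Icc (0:ℝ) 1, |F t| ≤ 2)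
    (hFsym : ∀ t, F (1 - t) = F t)
    (hΦ0 : ∀ u, 0 ≤ Φ u)
    (hT : 0 < T (2*β))
    (hL1 : ∀ t ∈ Icc (0:ℝ) 1, ∀ u : ℝ, F t ≤ t * Φ u + (1 - t) * Φ (-u))
    (hL2 : ∀ t ∈ Icc (0:ℝ) 1, 2*β ≤ 2*t - 1 → ∀ u ≤ 0,
        F t + (2*t - 1) * T (2*β) / (2*β) ≤ t * Φ u + (1 - t) * Φ (-u))
    (happrox : ∀ ε > 0, ∃ g : X → ℝ, Measurable g ∧
        ∀ x, condRisk (marginLoss Φ) η g x ≤ F (η x) + ε)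
    (hInt01 : ∀ g : X → ℝ, Measurable g → Integrable (condRisk loss01 η g) μ)
    (hIntΦ : ∀ g : X → ℝ, Measurable g → Integrable (condRisk (marginLoss Φ) η g) μ)
    (h : X → ℝ) (hhmeas : Measurable h) :
    genErr μ loss01 η h - bestErr μ loss01 η {g : X → ℝ | Measurable g}
      ≤ 2 * β * (genErr μ (marginLoss Φ) η h
          - bestErr μ (marginLoss Φ) η {g : X → ℝ | Measurable g}) / T (2 * β) := by
  set c : ℝ := 2 * β / T (2*β) with hc
  have hc0 : 0 < c := div_pos (by linarith) hT
  -- integrability facts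
  have hmin_eq : ∀ x, condRisk loss01 η (fun x => η x - 1/2) x = min (η x) (1 - η x) := by
    intro x
    rw [condRisk01_eq]
    rcases le_or_gt (1/2 : ℝ) (η x) with ht | ht
    · rw [if_pos (by linarith), min_eq_right (by linarith)]
    · rw [if_neg (by intro hh; simp at hh; linarith), min_eq_left (by linarith)]
  have hIntmin : Integrable (fun x => min (η x) (1 - η x)) μ := by
    exact (hInt01 (fun x => η x - 1/2) (hηmeas.sub measurable_const)).congr
      (ae_of_all _ hmin_eq)
  have hInt01h := hInt01 h hhmeas
  have hIntΦh := hIntΦ h hhmeas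
  have hIntF : Integrable (fun x => F (η x)) μ := by
    refine (integrable_const (2:ℝ)).mono' ((hFmeas.comp hηmeas).aestronglyMeasurable) ?_
    exact ae_of_all _ fun x => by simpa using hFbd (η x) (hη01 x)
  -- Step 1: bestErr01 ≥ ∫ min
  have hbest01 : ∫ x, min (η x) (1 - η x) ∂μ
      ≤ bestErr μ loss01 η {g : X → ℝ | Measurable g} := by
    apply le_csInf
    · exact ⟨_, ⟨(fun x => η x - 1/2), hηmeas.sub measurable_const, rfl⟩⟩
    · rintro b ⟨g, hg, rfl⟩
      exact integral_mono hIntmin (hInt01 g hg) (min_le_condRisk01 η hη01 g)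
  -- Step 2: bestErrΦ ≤ ∫ F ∘ η
  have hbestΦ : bestErr μ (marginLoss Φ) η {g : X → ℝ | Measurable g}
      ≤ ∫ x, F (η x) ∂μ := by
    refine le_of_forall_pos_le_add fun ε hε => ?_
    obtain ⟨g, hg, hgle⟩ := happrox ε hε
    have h1 : bestErr μ (marginLoss Φ) η {g : X → ℝ | Measurable g}
        ≤ genErr μ (marginLoss Φ) η g := by
      apply csInf_le
      · refine ⟨0, ?_⟩
        rintro b ⟨g', hg', rfl⟩
        refine integral_nonneg fun x => ?_
        show (0:ℝ) ≤ condRisk (marginLoss Φ) η g' x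
        rw [condRiskPhi_eq]
        have := hη01 x
        have := hΦ0 (g' x); have := hΦ0 (-(g' x))
        simp only [mem_Icc] at *
        nlinarith
      · exact ⟨g, hg, rfl⟩
    have h2 : genErr μ (marginLoss Φ) η g ≤ (∫ x, F (η x) ∂μ) + ε := by
      have : genErr μ (marginLoss Φ) η g ≤ ∫ x, (F (η x) + ε) ∂μ :=
        integral_mono (hIntΦ g hg) (hIntF.add (integrable_const ε)) hgle
      rwa [integral_add hIntF (integrable_const ε), integral_const, probReal_univ,
        smul_eq_mul, one_mul] at this
    linarith
  -- Step 3: pointwise a.e. inequality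
  have hkey : ∀ᵐ x ∂μ, condRisk loss01 η h x - min (η x) (1 - η x)
      ≤ c * (condRisk (marginLoss Φ) η h x - F (η x)) := by
    filter_upwards [hMassart] with x hx
    set t := η x with htdef
    have ht01 : t ∈ Icc (0:ℝ) 1 := hη01 x
    obtain ⟨ht0, ht1⟩ := ht01
    rw [condRisk01_eq, condRiskPhi_eq]
    rcases le_or_gt (0:ℝ) (h x) with hhx | hhx
    · rw [if_pos hhx]
      rcases le_or_gt (1/2 : ℝ) t with htt | htt
      · -- correct sign
        have hF := hL1 t ⟨ht0, ht1⟩ (h x)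
        have : min t (1 - t) = 1 - t := min_eq_right (by linarith)
        rw [this]
        nlinarith
      · -- wrong sign, t < 1/2, Massart gives t ≤ 1/2 - β
        have htm : t ≤ 1/2 - β := by
          rcases abs_cases (t - 1/2) with ⟨he, hp⟩ | ⟨he, hp⟩ <;> rw [he] at hx <;> linarith
        have h2 := hL2 (1 - t) ⟨by linarith, by linarith⟩ (by linarith) (-(h x)) (by linarith)
        rw [hFsym, (by ring : 1 - (1-t) = t), neg_neg] at h2
        rw [min_eq_left (by linarith)]
        have hval : c * ((2*(1-t) - 1) * T (2*β) / (2*β)) = 1 - 2*t := by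
          rw [hc]
          field_simp
          ring
        have h3 : (1 - 2*t) ≤ c * (t * Φ (h x) + (1 - t) * Φ (-(h x)) - F t) := by
          calc (1-2*t) = c * ((2*(1-t) - 1) * T (2*β) / (2*β)) := hval.symm
            _ ≤ c * (t * Φ (h x) + (1 - t) * Φ (-(h x)) - F t) :=
              mul_le_mul_of_nonneg_left (by linarith) hc0.le
        linarith
    · rw [if_neg (not_le.mpr hhx)]
      rcases le_or_gt t (1/2 : ℝ) with htt | htt
      · -- correct sign
        have hF := hL1 t ⟨ht0, ht1⟩ (h x)
        rw [min_eq_left (by linarith)]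
        nlinarith
      · -- wrong sign, t > 1/2, Massart gives 1/2 + β ≤ t
        have htm : 1/2 + β ≤ t := by
          rcases abs_cases (t - 1/2) with ⟨he, hp⟩ | ⟨he, hp⟩ <;> rw [he] at hx <;> linarith
        have h2 := hL2 t ⟨ht0, ht1⟩ (by linarith) (h x) hhx.le
        rw [min_eq_right (by linarith)]
        have hval : c * ((2*t - 1) * T (2*β) / (2*β)) = 2*t - 1 := by
          rw [hc]
          field_simp
        have h3 : (2*t - 1) ≤ c * (t * Φ (h x) + (1 - t) * Φ (-(h x)) - F t) := by
          calc (2*t-1) = c * ((2*t - 1) * T (2*β) / (2*β)) := hval.symm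
            _ ≤ c * (t * Φ (h x) + (1 - t) * Φ (-(h x)) - F t) :=
              mul_le_mul_of_nonneg_left (by linarith) hc0.le
        linarith
  -- Step 4: integrate and conclude
  have hint : ∫ x, (condRisk loss01 η h x - min (η x) (1 - η x)) ∂μ
      ≤ ∫ x, c * (condRisk (marginLoss Φ) η h x - F (η x)) ∂μ :=
    integral_mono_ae (hInt01h.sub hIntmin) ((hIntΦh.sub hIntF).const_mul c) hkey
  rw [integral_sub hInt01h hIntmin, integral_const_mul, integral_sub hIntΦh hIntF] at hint
  have hfinal : genErr μ loss01 η h - ∫ x, min (η x) (1 - η x) ∂μ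
      ≤ c * (genErr μ (marginLoss Φ) η h - ∫ x, F (η x) ∂μ) := hint
  have : c * (genErr μ (marginLoss Φ) η h - ∫ x, F (η x) ∂μ)
      ≤ c * (genErr μ (marginLoss Φ) η h
          - bestErr μ (marginLoss Φ) η {g : X → ℝ | Measurable g}) := by
    apply mul_le_mul_of_nonneg_left (by linarith) hc0.le
  calc genErr μ loss01 η h - bestErr μ loss01 η {g : X → ℝ | Measurable g}
      ≤ genErr μ loss01 η h - ∫ x, min (η x) (1 - η x) ∂μ := by linarith
    _ ≤ c * (genErr μ (marginLoss Φ) η h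
          - bestErr μ (marginLoss Φ) η {g : X → ℝ | Measurable g}) := by linarith
    _ = 2 * β * (genErr μ (marginLoss Φ) η h
          - bestErr μ (marginLoss Φ) η {g : X → ℝ | Measurable g}) / T (2 * β) := by
        rw [hc]; ring

end MainAux
section QuadCase
open MeasureTheory Set Real

lemma quad_case
    {X : Type*} [MeasurableSpace X] [Nonempty X]
    (β : ℝ) (hβ0 : 0 < β) (hβ2 : β ≤ 1/2)
    (μ : Measure X) [IsProbabilityMeasure μ]
    (η : X → ℝ) (hηmeas : Measurable η) (hη01 : ∀ x, η x ∈ Icc (0:ℝ) 1)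
    (hMassart : ∀ᵐ x ∂μ, β ≤ |η x - 1/2|)
    (hInt01 : ∀ g : X → ℝ, Measurable g → Integrable (condRisk loss01 η g) μ)
    (hIntΦ : ∀ g : X → ℝ, Measurable g →
      Integrable (condRisk (marginLoss (fun t => if t ≤ 1 then (1 - t)^2 else 0)) η g) μ)
    (h : X → ℝ) (hhmeas : Measurable h) :
    genErr μ loss01 η h - bestErr μ loss01 η {g : X → ℝ | Measurable g}
      ≤ 2 * β * (genErr μ (marginLoss (fun t => if t ≤ 1 then (1 - t)^2 else 0)) η h
          - bestErr μ (marginLoss (fun t => if t ≤ 1 then (1 - t)^2 else 0)) η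
              {g : X → ℝ | Measurable g}) / (fun t : ℝ => t^2) (2 * β) := by
  set Φ : ℝ → ℝ := fun t => if t ≤ 1 then (1 - t)^2 else 0 with hΦdef
  have hΦeval : ∀ u : ℝ, Φ u = if u ≤ 1 then (1 - u)^2 else 0 := fun u => rfl
  apply massart_aux β hβ0 hβ2 μ η hηmeas hη01 hMassart Φ (fun t => t^2)
    (fun t => 4*t*(1-t)) _ _ _ _ _ _ _ _ hInt01 hIntΦ h hhmeas
  · exact (measurable_const.mul measurable_id).mul (measurable_const.sub measurable_id)
  · intro t ⟨h0, h1⟩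
    show |4*t*(1-t)| ≤ 2
    rw [abs_le]
    constructor <;> nlinarith
  · intro t; ring
  · intro u
    rw [hΦeval]
    split <;> positivity
  · positivity
  · -- hL1
    intro t ⟨h0, h1⟩ u
    show 4*t*(1-t) ≤ t * Φ u + (1 - t) * Φ (-u)
    rw [hΦeval, hΦeval]
    rcases le_or_gt u 1 with hu1 | hu1 <;> rcases le_or_gt (-u) 1 with hu2 | hu2
    · rw [if_pos hu1, if_pos hu2]
      nlinarith [sq_nonneg (u - (2*t - 1))]
    · rw [if_pos hu1, if_neg (not_le.mpr hu2)]
      nlinarith [mul_nonneg h0 (by nlinarith : (0:ℝ) ≤ (1-u)^2 - 4), mul_nonneg h0 h0]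
    · rw [if_neg (not_le.mpr hu1), if_pos hu2]
      nlinarith [mul_nonneg (by linarith : (0:ℝ) ≤ 1 - t) (by nlinarith : (0:ℝ) ≤ (1+u)^2 - 4),
        mul_nonneg (by linarith : (0:ℝ) ≤ 1 - t) (by linarith : (0:ℝ) ≤ 1 - t)]
    · linarith
  · -- hL2
    intro t ⟨h0, h1⟩ hs u hu
    show 4*t*(1-t) + (2*t - 1) * (2*β)^2 / (2*β) ≤ t * Φ u + (1 - t) * Φ (-u)
    have hq : (2*t - 1) * (2*β)^2 / (2*β) = (2*t-1) * (2*β) := by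
      field_simp
    rw [hΦeval, hΦeval, hq, if_pos (by linarith : u ≤ 1)]
    rcases le_or_gt (-u) 1 with hu2 | hu2
    · rw [if_pos hu2]
      nlinarith [sq_nonneg (u - (2*t-1)), mul_nonneg (neg_nonneg.mpr hu) (by linarith : (0:ℝ) ≤ 2*t-1)]
    · rw [if_neg (not_le.mpr hu2)]
      nlinarith
  · -- happrox
    intro ε hε
    refine ⟨fun x => 2 * η x - 1, (measurable_const.mul hηmeas).sub measurable_const, fun x => ?_⟩
    rw [condRiskPhi_eq]
    show _ ≤ 4 * η x * (1 - η x) + ε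
    obtain ⟨h0, h1⟩ := hη01 x
    rw [hΦeval, hΦeval, if_pos (by linarith : 2 * η x - 1 ≤ 1),
      if_pos (by linarith : -(2 * η x - 1) ≤ 1)]
    nlinarith

end QuadCase
section ExpCase
open MeasureTheory Set Real

set_option maxHeartbeats 2000000 in
lemma exp_case
    {X : Type*} [MeasurableSpace X] [Nonempty X]
    (β : ℝ) (hβ0 : 0 < β) (hβ2 : β ≤ 1/2)
    (μ : Measure X) [IsProbabilityMeasure μ]
    (η : X → ℝ) (hηmeas : Measurable η) (hη01 : ∀ x, η x ∈ Icc (0:ℝ) 1)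
    (hMassart : ∀ᵐ x ∂μ, β ≤ |η x - 1/2|)
    (hInt01 : ∀ g : X → ℝ, Measurable g → Integrable (condRisk loss01 η g) μ)
    (hIntΦ : ∀ g : X → ℝ, Measurable g →
      Integrable (condRisk (marginLoss (fun t => Real.exp (-t))) η g) μ)
    (h : X → ℝ) (hhmeas : Measurable h) :
    genErr μ loss01 η h - bestErr μ loss01 η {g : X → ℝ | Measurable g}
      ≤ 2 * β * (genErr μ (marginLoss (fun t => Real.exp (-t))) η h
          - bestErr μ (marginLoss (fun t => Real.exp (-t))) η
              {g : X → ℝ | Measurable g}) / (fun t : ℝ => 1 - Real.sqrt (1 - t^2)) (2 * β) := by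
  set Φ : ℝ → ℝ := fun t => Real.exp (-t) with hΦdef
  have hΦeval : ∀ u : ℝ, Φ u = Real.exp (-u) := fun u => rfl
  have hq0 : (0:ℝ) ≤ 1 - (2*β)^2 := by nlinarith
  have hqlt : Real.sqrt (1 - (2*β)^2) < 1 := by
    have h1 : 1 - (2*β)^2 < 1 := by nlinarith
    calc Real.sqrt (1 - (2*β)^2) < Real.sqrt 1 := Real.sqrt_lt_sqrt hq0 h1
      _ = 1 := Real.sqrt_one
  apply massart_aux β hβ0 hβ2 μ η hηmeas hη01 hMassart Φ (fun t => 1 - Real.sqrt (1 - t^2))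
    (fun t => 2 * Real.sqrt (t * (1-t))) _ _ _ _ _ _ _ _ hInt01 hIntΦ h hhmeas
  · exact (measurable_const.mul
      (Real.continuous_sqrt.measurable.comp (measurable_id.mul (measurable_const.sub measurable_id))))
  · intro t ⟨h0, h1⟩
    show |2 * Real.sqrt (t * (1-t))| ≤ 2
    rw [abs_of_nonneg (by positivity)]
    have : Real.sqrt (t * (1-t)) ≤ 1 := Real.sqrt_le_one.mpr (by nlinarith)
    linarith
  · intro t
    show 2 * Real.sqrt ((1-t) * (1 - (1-t))) = 2 * Real.sqrt (t * (1-t))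
    rw [(by ring : (1-t) * (1 - (1-t)) = t * (1-t))]
  · intro u; exact (Real.exp_pos _).le
  · show 0 < 1 - Real.sqrt (1 - (2*β)^2)
    linarith
  · -- hL1 : AM-GM
    intro t ⟨h0, h1⟩ u
    show 2 * Real.sqrt (t * (1-t)) ≤ t * Φ u + (1 - t) * Φ (-u)
    rw [hΦeval, hΦeval, neg_neg]
    set a := Real.exp (-u) with ha
    set b := Real.exp u with hb
    have hab : a * b = 1 := by rw [ha, hb, ← Real.exp_add]; simp
    have hapos := Real.exp_pos (-u)
    have hbpos := Real.exp_pos u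
    rw [Real.sqrt_mul h0]
    have hs2 := Real.sq_sqrt h0
    have hs3 := Real.sq_sqrt (by linarith : (0:ℝ) ≤ 1 - t)
    set s2 := Real.sqrt t
    set s3 := Real.sqrt (1-t)
    have expand : (s2 * a - s3)^2 = t*a^2 - 2*(s2*s3)*a + (1-t) := by
      linear_combination a^2 * hs2 + hs3
    have key : 0 ≤ t*a^2 - 2*(s2*s3)*a + (1-t) := expand ▸ sq_nonneg _
    have haab : a*(a*b) = a := by rw [hab, mul_one]
    have hsab : (s2*s3)*(a*b) = s2*s3 := by rw [hab, mul_one]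
    nlinarith [mul_nonneg key hbpos.le, haab, hsab, h0, h1]
  · -- hL2
    intro t ⟨h0, h1⟩ hs u hu
    show 2 * Real.sqrt (t * (1-t)) + (2*t - 1) * (1 - Real.sqrt (1 - (2*β)^2)) / (2*β)
      ≤ t * Φ u + (1 - t) * Φ (-u)
    rw [hΦeval, hΦeval, neg_neg]
    set a := Real.exp (-u) with ha
    set b := Real.exp u with hb
    have hab : a * b = 1 := by rw [ha, hb, ← Real.exp_add]; simp
    have ha1 : 1 ≤ a := Real.one_le_exp (by linarith)
    have hbpos := Real.exp_pos u
    -- step i : 1 ≤ t*a + (1-t)*b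
    have hstep1 : 1 ≤ t * a + (1 - t) * b := by
      have hta : t ≤ t * a := by nlinarith [mul_le_mul_of_nonneg_left ha1 h0]
      nlinarith [mul_nonneg (mul_nonneg (by linarith : (0:ℝ) ≤ a - 1)
        (by nlinarith : (0:ℝ) ≤ t * a - (1 - t))) hbpos.le, hab]
    -- step ii
    set q := Real.sqrt (1 - (2*β)^2) with hqdef
    set r := Real.sqrt (t * (1-t)) with hrdef
    have hq2 : q^2 = 1 - (2*β)^2 := Real.sq_sqrt hq0
    have hr2 : r^2 = t * (1-t) := Real.sq_sqrt (by nlinarith)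
    have hqn : 0 ≤ q := Real.sqrt_nonneg _
    have hrn : 0 ≤ r := Real.sqrt_nonneg _
    have hq2r : 2*r ≤ q := by nlinarith
    have hA : 2*β*(1+2*r) ≤ (2*t-1)*(1+q) := by nlinarith [mul_le_mul hs hq2r (by linarith) (by linarith)]
    have hE : (2*β*(1-2*r) - (2*t-1)*(1-q)) * ((1+2*r)*(1+q))
        = 2*β*(2*t-1)*((2*t-1)*(1+q) - 2*β*(1+2*r)) := by
      linear_combination (-8*β*(1+q)) * hr2 + ((2*t-1)*(1+2*r)) * hq2
    have hP : 0 < (1+2*r)*(1+q) := by nlinarith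
    have hEpos : 0 ≤ 2*β*(1-2*r) - (2*t-1)*(1-q) := by
      have hRHS : 0 ≤ 2*β*(2*t-1)*((2*t-1)*(1+q) - 2*β*(1+2*r)) :=
        mul_nonneg (mul_nonneg (by linarith) (by linarith)) (by linarith)
      have h2 := div_nonneg (hE ▸ hRHS) hP.le
      rwa [mul_div_assoc, div_self hP.ne', mul_one] at h2
    have hstep2 : (2*t - 1) * (1 - q) / (2*β) ≤ 1 - 2*r := by
      rw [div_le_iff₀ (by linarith : (0:ℝ) < 2*β)]
      nlinarith
    linarith
  · -- happrox
    intro ε hε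
    set n : ℝ := max 1 (-Real.log (ε/2)) with hn
    have hn1 : (1:ℝ) ≤ n := le_max_left _ _
    have hexpn : Real.exp (-n) ≤ ε/2 := by
      have h1 : -n ≤ Real.log (ε/2) := by
        have := le_max_right 1 (-Real.log (ε/2)); linarith
      calc Real.exp (-n) ≤ Real.exp (Real.log (ε/2)) := Real.exp_le_exp.mpr h1
        _ = ε/2 := Real.exp_log (by linarith)
    refine ⟨fun x => if η x = 1 then n else if η x = 0 then -n
      else max (-n) (min n (Real.log (η x / (1 - η x)) / 2)), ?_, ?_⟩
    · refine Measurable.ite (hηmeas (measurableSet_singleton 1)) measurable_const ?_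
      refine Measurable.ite (hηmeas (measurableSet_singleton 0)) measurable_const ?_
      exact measurable_const.max (measurable_const.min
        ((Real.measurable_log.comp (hηmeas.div (measurable_const.sub hηmeas))).div_const 2))
    · intro x
      rw [condRiskPhi_eq]
      show _ ≤ 2 * Real.sqrt (η x * (1 - η x)) + ε
      obtain ⟨h0, h1⟩ := hη01 x
      have hF0 : 0 ≤ Real.sqrt (η x * (1 - η x)) := Real.sqrt_nonneg _
      by_cases ht1 : η x = 1
      · rw [if_pos ht1, ht1, hΦeval, hΦeval]
        rw [(by norm_num : (1:ℝ)*(1-1) = 0), Real.sqrt_zero]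
        have := Real.exp_pos (-(-n))
        linarith [hexpn, hε]
      by_cases ht0 : η x = 0
      · rw [if_neg ht1, if_pos ht0, ht0, hΦeval, hΦeval, neg_neg]
        rw [(by norm_num : (0:ℝ)*(1-0) = 0), Real.sqrt_zero]
        have := Real.exp_pos n
        linarith [hexpn, hε]
      · -- 0 < t < 1
        simp only [if_neg ht1, if_neg ht0, hΦeval]
        set t := η x with htdef
        have ht0' : 0 < t := lt_of_le_of_ne h0 (Ne.symm ht0)
        have ht1' : t < 1 := lt_of_le_of_ne h1 ht1
        have hpos : 0 < t / (1 - t) := div_pos ht0' (by linarith)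
        set L := Real.log (t / (1 - t)) with hL
        have hexpL : Real.exp L = t / (1 - t) := Real.exp_log hpos
        rcases le_or_gt (L/2) n with hc1 | hc1
        · rcases le_or_gt (-n) (L/2) with hc2 | hc2
          · -- g x = L/2, exact minimum
            rw [min_eq_right hc1, max_eq_right hc2]
            have hEe : Real.exp (L/2) = Real.sqrt (t / (1-t)) := by
              rw [Real.sqrt_eq_rpow, Real.rpow_def_of_pos hpos, ← hL]
              congr 1; ring
            have hEn : Real.exp (-(L/2)) = Real.sqrt ((1-t)/t) := by
              rw [Real.exp_neg, hEe, ← Real.sqrt_inv, inv_div]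
            rw [hEn, neg_neg, hEe]
            have heq : t * Real.sqrt ((1-t)/t) + (1-t) * Real.sqrt (t/(1-t))
                = 2 * Real.sqrt (t * (1-t)) := by
              rw [Real.sqrt_div (by linarith : (0:ℝ) ≤ 1-t), Real.sqrt_div h0,
                Real.sqrt_mul h0]
              have hs2 := Real.sq_sqrt h0
              have hs3 := Real.sq_sqrt (by linarith : (0:ℝ) ≤ 1 - t)
              have hs2p : 0 < Real.sqrt t := Real.sqrt_pos.mpr ht0'
              have hs3p : 0 < Real.sqrt (1-t) := Real.sqrt_pos.mpr (by linarith)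
              field_simp
              nlinarith [hs2, hs3]
            rw [heq]
            linarith
          · -- g x = -n, t very small
            rw [min_eq_right hc1, max_eq_left hc2.le]
            simp only [neg_neg]
            have hL2n : L < -(2*n) := by linarith
            have hlt : t / (1-t) < Real.exp (-(2*n)) := by
              rw [← hexpL]; exact Real.exp_lt_exp.mpr hL2n
            have h2 : t < (1-t) * Real.exp (-(2*n)) := by
              rw [div_lt_iff₀ (by linarith : (0:ℝ) < 1 - t)] at hlt; linarith [hlt]
            have hee : Real.exp (-(2*n)) = Real.exp (-n) * Real.exp (-n) := by
              rw [← Real.exp_add]; congr 1; ring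
            have hb1 : Real.exp n * Real.exp (-n) = 1 := by
              rw [← Real.exp_add]; simp
            have h3 : t * Real.exp n ≤ Real.exp (-n) := by
              nlinarith [Real.exp_pos n, Real.exp_pos (-n), hee, hb1, h2]
            have h4 : (1-t) * Real.exp (-n) ≤ Real.exp (-n) := by
              nlinarith [Real.exp_pos (-n)]
            have h5 : 2 * Real.exp (-n) ≤ ε := by linarith
            linarith [Real.sqrt_nonneg (t*(1-t))]
        · -- g x = n, t close to 1
          rw [min_eq_left hc1.le]
          rw [max_eq_right (by linarith : -n ≤ n)]
          have hL2n : 2*n < L := by linarith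
          have hlt : Real.exp (2*n) < t / (1-t) := by
            rw [← hexpL]; exact Real.exp_lt_exp.mpr hL2n
          have h2 : (1-t) * Real.exp (2*n) < t := by
            rw [lt_div_iff₀ (by linarith : (0:ℝ) < 1 - t)] at hlt; linarith
          have hee : Real.exp (2*n) = Real.exp n * Real.exp n := by
            rw [← Real.exp_add]; congr 1; ring
          have hb1 : Real.exp n * Real.exp (-n) = 1 := by
            rw [← Real.exp_add]; simp
          have hend : t * Real.exp (-n) + (1-t) * Real.exp n ≤ 2 * Real.exp (-n) := by
            nlinarith [Real.exp_pos n, Real.exp_pos (-n), hee, hb1, h2]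
          calc t * Real.exp (-n) + (1-t) * Real.exp (-(-n)) ≤ 2 * Real.exp (-n) := by
                rw [neg_neg]; exact hend
            _ ≤ ε := by linarith
            _ ≤ 2 * Real.sqrt (t * (1-t)) + ε := by linarith [Real.sqrt_nonneg (t*(1-t))]

end ExpCase
section LogisticHelpers
open Real

/-- `G x = (1+x) ln(1+x) + (1-x) ln(1-x)`. -/
noncomputable def Gent (x : ℝ) : ℝ := (1+x) * Real.log (1+x) + (1-x) * Real.log (1-x)

lemma Gent_pos {a : ℝ} (ha0 : 0 < a) (ha1 : a ≤ 1) : 0 < Gent a := by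
  rcases eq_or_lt_of_le ha1 with rfl | ha1'
  · have : Gent 1 = 2 * Real.log 2 := by
      simp [Gent]
      norm_num
    rw [this]
    have := Real.log_pos (by norm_num : (1:ℝ) < 2)
    linarith
  · have h1 : Real.log ((1+a)⁻¹) < (1+a)⁻¹ - 1 :=
      Real.log_lt_sub_one_of_pos (by positivity) (by
        intro hcon
        have : (1:ℝ)+a = 1 := by
          field_simp at hcon
          linarith
        linarith)
    rw [Real.log_inv] at h1
    have h2 : Real.log ((1-a)⁻¹) ≤ (1-a)⁻¹ - 1 :=
      Real.log_le_sub_one_of_pos (inv_pos.mpr (by linarith))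
    rw [Real.log_inv] at h2
    have e1 : (1+a) * ((1+a)⁻¹ - 1) = -a := by
      rw [mul_sub, mul_inv_cancel₀ (by linarith : (1:ℝ)+a ≠ 0)]; ring
    have e2 : (1-a) * ((1-a)⁻¹ - 1) = a := by
      rw [mul_sub, mul_inv_cancel₀ (by linarith : (1:ℝ)-a ≠ 0)]; ring
    have h3 : (1+a) * (-Real.log (1+a)) < -a := by
      calc (1+a) * (-Real.log (1+a)) < (1+a) * ((1+a)⁻¹ - 1) :=
            mul_lt_mul_of_pos_left h1 (by linarith)
        _ = -a := e1
    have h4 : (1-a) * (-Real.log (1-a)) ≤ a := by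
      calc (1-a) * (-Real.log (1-a)) ≤ (1-a) * ((1-a)⁻¹ - 1) :=
            mul_le_mul_of_nonneg_left h2 (by linarith)
        _ = a := e2
    simp only [Gent]
    nlinarith

lemma Gent_slope {a s : ℝ} (ha0 : 0 < a) (has : a ≤ s) (hs1 : s ≤ 1) :
    Gent a * s ≤ Gent s * a := by
  have hs0 : 0 < s := lt_of_lt_of_le ha0 has
  set lam := a / s with hlam
  have hlam0 : 0 ≤ lam := by positivity
  have hlam1 : lam ≤ 1 := by
    rw [hlam, div_le_one hs0]; exact has
  have h1 := Real.convexOn_mul_log.2 (Set.mem_Ici.mpr (by linarith : (0:ℝ) ≤ 1+s))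
    (Set.mem_Ici.mpr (by norm_num : (0:ℝ) ≤ 1)) (show 0 ≤ lam from hlam0)
    (show 0 ≤ 1 - lam by linarith) (show lam + (1-lam) = 1 by ring)
  have h2 := Real.convexOn_mul_log.2 (Set.mem_Ici.mpr (by linarith : (0:ℝ) ≤ 1-s))
    (Set.mem_Ici.mpr (by norm_num : (0:ℝ) ≤ 1)) (show 0 ≤ lam from hlam0)
    (show 0 ≤ 1 - lam by linarith) (show lam + (1-lam) = 1 by ring)
  simp only [smul_eq_mul, Real.log_one, mul_zero, one_mul, mul_one, add_zero] at h1 h2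
  rw [show lam * (1+s) + (1-lam) = 1 + a by rw [hlam]; field_simp; ring] at h1
  rw [show lam * (1-s) + (1-lam) = 1 - a by rw [hlam]; field_simp; ring] at h2
  have hsum : Gent a ≤ lam * Gent s := by
    simp only [Gent]
    calc (1+a) * Real.log (1+a) + (1-a) * Real.log (1-a)
        ≤ lam * ((1+s) * Real.log (1+s)) + lam * ((1-s) * Real.log (1-s)) := by linarith
      _ = lam * ((1+s) * Real.log (1+s) + (1-s) * Real.log (1-s)) := by ring
  have hfin : Gent a * s ≤ lam * Gent s * s :=
    mul_le_mul_of_nonneg_right hsum hs0.le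
  calc Gent a * s ≤ lam * Gent s * s := hfin
    _ = Gent s * a := by rw [hlam]; field_simp

/-- Gibbs inequality in `ln` form. -/
lemma gibbs_log {t a b : ℝ} (h0 : 0 ≤ t) (h1 : t ≤ 1) (hapos : 0 < a) (hbpos : 0 < b)
    (hab : a * b = 1) :
    -(t * Real.log t) - (1-t) * Real.log (1-t)
      ≤ t * Real.log (1+a) + (1-t) * Real.log (1+b) := by
  have hla : 0 ≤ Real.log (1+a) := Real.log_nonneg (by linarith)
  have hlb : 0 ≤ Real.log (1+b) := Real.log_nonneg (by linarith)
  rcases eq_or_lt_of_le h0 with rfl | h0'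
  · simp only [neg_zero, zero_mul, sub_zero, one_mul, Real.log_one, mul_zero]
    norm_num
    linarith [hlb]
  rcases eq_or_lt_of_le h1 with rfl | h1'
  · simp only [Real.log_one, sub_self, zero_mul, mul_zero, one_mul, mul_one]
    norm_num
    linarith [hla]
  have h1a : (0:ℝ) < 1 + a := by linarith
  have h1b : (0:ℝ) < 1 + b := by linarith
  have hsum : 1/(1+a) + 1/(1+b) = 1 := by
    field_simp
    linarith [hab]
  have key1 : Real.log (t * (1+a)) ≥ 1 - (t * (1+a))⁻¹ := by
    have := Real.log_le_sub_one_of_pos (show (0:ℝ) < (t * (1+a))⁻¹ by positivity)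
    rw [Real.log_inv] at this
    linarith
  have key2 : Real.log ((1-t) * (1+b)) ≥ 1 - ((1-t) * (1+b))⁻¹ := by
    have := Real.log_le_sub_one_of_pos
      (show (0:ℝ) < ((1-t) * (1+b))⁻¹ from inv_pos.mpr (mul_pos (by linarith) h1b))
    rw [Real.log_inv] at this
    linarith
  have e1 : t * (t * (1+a))⁻¹ = 1/(1+a) := by field_simp
  have e2 : (1-t) * ((1-t) * (1+b))⁻¹ = 1/(1+b) := by
    rw [mul_inv, ← mul_assoc, mul_inv_cancel₀ (by linarith : (1:ℝ)-t ≠ 0), one_mul, one_div]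
  have m1 : t * Real.log (t * (1+a)) ≥ t - 1/(1+a) := by
    have := mul_le_mul_of_nonneg_left key1 h0'.le
    nlinarith [e1]
  have m2 : (1-t) * Real.log ((1-t) * (1+b)) ≥ (1-t) - 1/(1+b) := by
    have := mul_le_mul_of_nonneg_left key2 (by linarith : (0:ℝ) ≤ 1-t)
    nlinarith [e2]
  rw [Real.log_mul h0'.ne' h1a.ne'] at m1
  rw [Real.log_mul (by linarith : (1:ℝ)-t ≠ 0) h1b.ne'] at m2
  nlinarith [m1, m2, hsum]

/-- wrong-sign lower bound in `ln` form. -/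
lemma wrong_sign_log {t a b : ℝ} (ht : 1/2 ≤ t) (h1 : t ≤ 1) (ha1 : 1 ≤ a) (hbpos : 0 < b)
    (hab : a * b = 1) :
    Real.log 2 ≤ t * Real.log (1+a) + (1-t) * Real.log (1+b) := by
  have hapos : (0:ℝ) < a := by linarith
  have hb : b = a⁻¹ := by
    field_simp
    linear_combination hab
  have h1b : 1 + b = (1+a) * b := by
    have : (1+a) * b = b + a * b := by ring
    rw [this, hab]; ring
  have hlog1b : Real.log (1+b) = Real.log (1+a) - Real.log a := by
    rw [h1b, Real.log_mul (by linarith) hbpos.ne', hb, Real.log_inv]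
    ring
  have hla : 0 ≤ Real.log a := Real.log_nonneg ha1
  have hkey : 2 * Real.log (1+a) - Real.log a ≥ 2 * Real.log 2 := by
    have hsq : 4 * a ≤ (1+a)^2 := by nlinarith [sq_nonneg (a-1)]
    have := Real.log_le_log (by positivity : (0:ℝ) < 4*a) hsq
    rw [Real.log_mul (by norm_num) hapos.ne', (by norm_num : (4:ℝ) = 2^2), Real.log_pow,
      (by ring : ((2:ℕ):ℝ) * Real.log 2 = 2 * Real.log 2)] at this
    rw [(by ring : (1+a)^2 = (1+a)*(1+a)), Real.log_mul (by linarith) (by linarith)] at this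
    linarith
  rw [hlog1b]
  have expand : t * Real.log (1+a) + (1-t) * (Real.log (1+a) - Real.log a)
      = Real.log (1+a) - (1-t) * Real.log a := by ring
  rw [expand]
  have : (1-t) * Real.log a ≤ (1/2) * Real.log a :=
    mul_le_mul_of_nonneg_right (by linarith) hla
  linarith

end LogisticHelpers
section LogisticCase
open MeasureTheory Set Real Filter

lemma neg_mul_log_le {t : ℝ} (h0 : 0 ≤ t) : -(t * Real.log t) ≤ 1 - t := by
  rcases eq_or_lt_of_le h0 with rfl | h0'
  · norm_num
  · have := Real.log_le_sub_one_of_pos (inv_pos.mpr h0')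
    rw [Real.log_inv] at this
    have h2 : t * (-Real.log t) ≤ t * (t⁻¹ - 1) := mul_le_mul_of_nonneg_left this h0'.le
    have e1 : t * (t⁻¹ - 1) = 1 - t := by
      rw [mul_sub, mul_inv_cancel₀ h0'.ne']; ring
    linarith [e1 ▸ h2]

lemma Gent_one : Gent 1 = 2 * Real.log 2 := by
  simp [Gent]
  norm_num <;> ring

lemma Fent_eq {t : ℝ} (h0 : 0 < t) (h1 : t ≤ 1) :
    -(t * Real.log t) - (1-t) * Real.log (1-t) = Real.log 2 - Gent (2*t-1) / 2 := by
  rcases eq_or_lt_of_le h1 with rfl | h1'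
  · rw [(by norm_num : 2*(1:ℝ)-1 = 1), Gent_one]
    simp [Real.log_one]
  · have e1 : (1:ℝ) + (2*t-1) = 2*t := by ring
    have e2 : (1:ℝ) - (2*t-1) = 2*(1-t) := by ring
    simp only [Gent, e1, e2]
    rw [Real.log_mul (by norm_num) h0.ne', Real.log_mul (by norm_num) (by linarith : (1:ℝ)-t ≠ 0)]
    ring

set_option maxHeartbeats 2000000 in
lemma logistic_case
    {X : Type*} [MeasurableSpace X] [Nonempty X]
    (β : ℝ) (hβ0 : 0 < β) (hβ2 : β ≤ 1/2)
    (μ : Measure X) [IsProbabilityMeasure μ]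
    (η : X → ℝ) (hηmeas : Measurable η) (hη01 : ∀ x, η x ∈ Icc (0:ℝ) 1)
    (hMassart : ∀ᵐ x ∂μ, β ≤ |η x - 1/2|)
    (hInt01 : ∀ g : X → ℝ, Measurable g → Integrable (condRisk loss01 η g) μ)
    (hIntΦ : ∀ g : X → ℝ, Measurable g →
      Integrable (condRisk (marginLoss (fun t => Real.logb 2 (1 + Real.exp (-t)))) η g) μ)
    (h : X → ℝ) (hhmeas : Measurable h) :
    genErr μ loss01 η h - bestErr μ loss01 η {g : X → ℝ | Measurable g}
      ≤ 2 * β * (genErr μ (marginLoss (fun t => Real.logb 2 (1 + Real.exp (-t)))) η h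
          - bestErr μ (marginLoss (fun t => Real.logb 2 (1 + Real.exp (-t)))) η
              {g : X → ℝ | Measurable g}) /
        (fun t : ℝ => ((t + 1)/2) * Real.logb 2 (t + 1) + ((1 - t)/2) * Real.logb 2 (1 - t))
          (2 * β) := by
  set Φ : ℝ → ℝ := fun t => Real.logb 2 (1 + Real.exp (-t)) with hΦdef
  have hΦeval : ∀ u : ℝ, Φ u = Real.logb 2 (1 + Real.exp (-u)) := fun u => rfl
  have hl2 : (0:ℝ) < Real.log 2 := Real.log_pos (by norm_num)
  have hl2' : (1:ℝ)/2 ≤ Real.log 2 := by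
    have := Real.log_two_gt_d9
    linarith
  have hlogb : ∀ x : ℝ, Real.logb 2 x = Real.log x / Real.log 2 := fun x => rfl
  set T : ℝ → ℝ := fun t => ((t + 1)/2) * Real.logb 2 (t + 1) + ((1 - t)/2) * Real.logb 2 (1 - t)
    with hTdef
  have hTeq : ∀ x : ℝ, T x = Gent x / (2 * Real.log 2) := by
    intro x
    show ((x + 1)/2) * Real.logb 2 (x + 1) + ((1 - x)/2) * Real.logb 2 (1 - x)
      = Gent x / (2 * Real.log 2)
    rw [hlogb, hlogb]
    simp only [Gent]
    rw [(by ring : (1:ℝ) + x = x + 1)]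
    field_simp
  set F : ℝ → ℝ := fun t => -(t * Real.logb 2 t) - (1-t) * Real.logb 2 (1-t) with hFdef
  have hFeval : ∀ t : ℝ, F t = -(t * Real.logb 2 t) - (1-t) * Real.logb 2 (1-t) :=
    fun t => rfl
  have hF0 : ∀ t : ℝ, 0 ≤ t → t ≤ 1 → 0 ≤ F t := by
    intro t h0 h1
    rw [hFeval]
    have l1 : Real.logb 2 t ≤ 0 := Real.logb_nonpos (by norm_num) h0 h1
    have l2 : Real.logb 2 (1-t) ≤ 0 := Real.logb_nonpos (by norm_num) (by linarith) (by linarith)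
    nlinarith
  apply massart_aux β hβ0 hβ2 μ η hηmeas hη01 hMassart Φ T F
    _ _ _ _ _ _ _ _ hInt01 hIntΦ h hhmeas
  · -- measurability of F
    have mlogb : Measurable (Real.logb 2) := Real.measurable_log.div_const _
    exact ((measurable_id.mul mlogb).neg).sub
      ((measurable_const.sub measurable_id).mul
        (mlogb.comp (measurable_const.sub measurable_id)))
  · -- |F| ≤ 2
    intro t ⟨h0, h1⟩
    rw [abs_le]
    constructor
    · have := hF0 t h0 h1; linarith
    · rw [hFeval, hlogb, hlogb]
      have b1 := neg_mul_log_le h0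
      have b2 := neg_mul_log_le (by linarith : (0:ℝ) ≤ 1 - t)
      rw [(by ring : (1:ℝ) - (1-t) = t)] at b2
      have key : -(t * Real.log t) - (1-t) * Real.log (1-t) ≤ 1 := by linarith
      have hnn : 0 ≤ -(t * Real.log t) - (1-t) * Real.log (1-t) := by
        have l1 : Real.log t ≤ 0 := Real.log_nonpos h0 h1
        have l2 : Real.log (1-t) ≤ 0 := Real.log_nonpos (by linarith) (by linarith)
        nlinarith
      rw [div_eq_mul_inv, div_eq_mul_inv, (by ring :
        -(t * (Real.log t * (Real.log 2)⁻¹)) - (1-t) * (Real.log (1-t) * (Real.log 2)⁻¹)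
        = (-(t * Real.log t) - (1-t) * Real.log (1-t)) * (Real.log 2)⁻¹)]
      have hinv : (Real.log 2)⁻¹ ≤ 2 := by
        rw [inv_le_comm₀ (by linarith) (by norm_num)]
        linarith
      nlinarith [mul_le_mul_of_nonneg_left hinv hnn]
  · -- symmetry
    intro t
    rw [hFeval, hFeval, (by ring : (1:ℝ) - (1-t) = t)]
    ring
  · -- Φ ≥ 0
    intro u
    exact Real.logb_nonneg (by norm_num) (by linarith [Real.exp_pos (-u)])
  · -- T(2β) > 0
    rw [hTeq]
    have := Gent_pos (by linarith : (0:ℝ) < 2*β) (by linarith)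
    positivity
  · -- hL1 (Gibbs)
    intro t ⟨h0, h1⟩ u
    rw [hΦeval, hΦeval, neg_neg, hFeval]
    have hab : Real.exp (-u) * Real.exp u = 1 := by rw [← Real.exp_add]; simp
    have key := gibbs_log h0 h1 (Real.exp_pos (-u)) (Real.exp_pos u) hab
    have h' := mul_le_mul_of_nonneg_right key
      (by positivity : (0:ℝ) ≤ (Real.log 2)⁻¹)
    rw [hlogb, hlogb, hlogb, hlogb]
    simp only [div_eq_mul_inv]
    linarith [h']
  · -- hL2
    intro t ⟨h0, h1⟩ hs u hu
    rw [hΦeval, hΦeval, neg_neg]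
    have ht2 : (1:ℝ)/2 ≤ t := by linarith
    have ht0' : (0:ℝ) < t := by linarith
    have hab : Real.exp (-u) * Real.exp u = 1 := by rw [← Real.exp_add]; simp
    have ha1 : (1:ℝ) ≤ Real.exp (-u) := Real.one_le_exp (by linarith)
    -- step i
    have keyi := wrong_sign_log ht2 h1 ha1 (Real.exp_pos u) hab
    have h' := mul_le_mul_of_nonneg_right keyi
      (by positivity : (0:ℝ) ≤ (Real.log 2)⁻¹)
    have hl2inv : Real.log 2 * (Real.log 2)⁻¹ = 1 := mul_inv_cancel₀ hl2.ne'
    have stepi : 1 ≤ t * Real.logb 2 (1 + Real.exp (-u))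
        + (1-t) * Real.logb 2 (1 + Real.exp u) := by
      rw [hlogb, hlogb]
      simp only [div_eq_mul_inv]
      linarith [h', hl2inv]
    -- step ii
    have hFeq : F t = 1 - Gent (2*t-1) / (2 * Real.log 2) := by
      rw [hFeval, hlogb, hlogb]
      have := Fent_eq ht0' h1
      have e : -(t * (Real.log t / Real.log 2)) - (1-t) * (Real.log (1-t) / Real.log 2)
          = (-(t * Real.log t) - (1-t) * Real.log (1-t)) / Real.log 2 := by ring
      rw [e, this]
      field_simp
    have hslope := Gent_slope (by linarith : (0:ℝ) < 2*β) hs (by linarith)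
    have hstepii : F t + (2*t - 1) * T (2*β) / (2*β) ≤ 1 := by
      rw [hFeq, hTeq]
      have e3 : (2*t-1) * (Gent (2*β) / (2*Real.log 2)) / (2*β)
          = (Gent (2*β) * (2*t-1)) / ((2*Real.log 2)*(2*β)) := by ring
      rw [e3]
      have e5 : (Gent (2*β) * (2*t-1)) / ((2*Real.log 2)*(2*β))
          ≤ Gent (2*t-1) / (2*Real.log 2) := by
        rw [div_le_div_iff₀ (by positivity) (by positivity)]
        nlinarith [mul_le_mul_of_nonneg_right hslope
          (by positivity : (0:ℝ) ≤ 2*Real.log 2)]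
      linarith
    linarith
  · -- happrox
    intro ε hε
    have tend : Tendsto (fun x : ℝ => (3+2*x) * Real.exp (-x)) atTop (nhds 0) := by
      have t1 := Real.tendsto_exp_neg_atTop_nhds_zero
      have t2 := Real.tendsto_pow_mul_exp_neg_atTop_nhds_zero 1
      have t3 := (t1.const_mul (3:ℝ)).add (t2.const_mul (2:ℝ))
      simp only [mul_zero, add_zero] at t3
      refine Tendsto.congr (fun x => ?_) t3
      ring
    have hev := (tend.eventually (gt_mem_nhds hε)).and (eventually_ge_atTop (1:ℝ))
    obtain ⟨n, hnε, hn1⟩ := hev.exists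
    have hn0 : (0:ℝ) ≤ n := by linarith
    have hen : (0:ℝ) < Real.exp (-n) := Real.exp_pos _
    have hb1 : Real.exp n * Real.exp (-n) = 1 := by rw [← Real.exp_add]; simp
    have hub1 : Real.logb 2 (1 + Real.exp (-n)) ≤ 2 * Real.exp (-n) := by
      have hlog : Real.log (1 + Real.exp (-n)) ≤ Real.exp (-n) := by
        have := Real.log_le_sub_one_of_pos (by positivity : (0:ℝ) < 1 + Real.exp (-n))
        linarith
      rw [hlogb, div_le_iff₀ hl2]
      nlinarith
    have hub2 : Real.logb 2 (1 + Real.exp n) ≤ 1 + 2*n := by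
      have hle : (1:ℝ) + Real.exp n ≤ 2 * Real.exp n := by
        nlinarith [Real.one_le_exp hn0]
      have h1' : Real.log (1 + Real.exp n) ≤ Real.log 2 + n := by
        calc Real.log (1 + Real.exp n) ≤ Real.log (2 * Real.exp n) :=
              Real.log_le_log (by positivity) hle
          _ = Real.log 2 + n := by
              rw [Real.log_mul (by norm_num) (Real.exp_pos n).ne', Real.log_exp]
      rw [hlogb, div_le_iff₀ hl2]
      nlinarith
    have hlb : ∀ w : ℝ, 0 ≤ Real.logb 2 (1 + Real.exp w) :=
      fun w => Real.logb_nonneg (by norm_num) (by linarith [Real.exp_pos w])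
    refine ⟨fun x => if η x = 1 then n else if η x = 0 then -n
      else max (-n) (min n (Real.log (η x / (1 - η x)))), ?_, ?_⟩
    · refine Measurable.ite (hηmeas (measurableSet_singleton 1)) measurable_const ?_
      refine Measurable.ite (hηmeas (measurableSet_singleton 0)) measurable_const ?_
      exact measurable_const.max (measurable_const.min
        (Real.measurable_log.comp (hηmeas.div (measurable_const.sub hηmeas))))
    · intro x
      rw [condRiskPhi_eq]
      obtain ⟨h0, h1⟩ := hη01 x
      have hFnn := hF0 (η x) h0 h1
      by_cases ht1 : η x = 1
      · rw [if_pos ht1, ht1, hΦeval, hΦeval]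
        have hF1 : 0 ≤ F 1 := hF0 1 zero_le_one le_rfl
        nlinarith [hub1, hlb (-n), hlb n]
      by_cases ht0 : η x = 0
      · rw [if_neg ht1, if_pos ht0, ht0, hΦeval, hΦeval, neg_neg]
        have hFz : 0 ≤ F 0 := hF0 0 le_rfl zero_le_one
        nlinarith [hub1, hlb n, hlb (-n)]
      · rw [if_neg ht1, if_neg ht0, hΦeval, hΦeval]
        set t := η x with htdef
        have ht0' : 0 < t := lt_of_le_of_ne h0 (Ne.symm ht0)
        have ht1' : t < 1 := lt_of_le_of_ne h1 ht1
        have hpos : 0 < t / (1 - t) := div_pos ht0' (by linarith)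
        set L := Real.log (t / (1 - t)) with hL
        have hexpL : Real.exp L = t / (1 - t) := Real.exp_log hpos
        rcases le_or_gt L n with hc1 | hc1
        · rcases le_or_gt (-n) L with hc2 | hc2
          · -- exact minimum
            rw [min_eq_right hc1, max_eq_right hc2]
            have hnegL : Real.exp (-L) = (1-t)/t := by
              rw [hL, ← Real.log_inv, Real.exp_log (inv_pos.mpr hpos), inv_div]
            have hposL : Real.exp (-(-L)) = t/(1-t) := by
              rw [neg_neg, hexpL]
            rw [hnegL, hposL]
            have e1 : 1 + (1-t)/t = t⁻¹ := by
              field_simp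
              ring
            have hne : (1:ℝ) - t ≠ 0 := by linarith
            have e2 : 1 + t/(1-t) = (1-t)⁻¹ := by
              field_simp
              ring
            rw [e1, e2, Real.logb_inv, Real.logb_inv]
            rw [hFeval]
            linarith [hε.le]
          · -- L < -n : t small, g x = -n
            rw [min_eq_right hc1, max_eq_left hc2.le]
            simp only [neg_neg]
            have hlt : t / (1-t) < Real.exp (-n) := by
              rw [← hexpL]; exact Real.exp_lt_exp.mpr hc2
            have h2 : t < (1-t) * Real.exp (-n) := by
              rw [div_lt_iff₀ (by linarith : (0:ℝ) < 1 - t)] at hlt; linarith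
            have h3 : t ≤ Real.exp (-n) := by nlinarith
            have term1 : t * Real.logb 2 (1 + Real.exp n) ≤ Real.exp (-n) * (1 + 2*n) :=
              mul_le_mul h3 hub2 (hlb n) hen.le
            have term2 : (1-t) * Real.logb 2 (1 + Real.exp (-n)) ≤ 2 * Real.exp (-n) := by
              nlinarith [hub1, hlb (-n)]
            nlinarith
        · -- L > n : t close to 1, g x = n
          rw [min_eq_left hc1.le, max_eq_right (by linarith : -n ≤ n)]
          simp only [neg_neg]
          have hlt : Real.exp n < t / (1-t) := by
            rw [← hexpL]; exact Real.exp_lt_exp.mpr hc1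
          have h2 : (1-t) * Real.exp n < t := by
            rw [lt_div_iff₀ (by linarith : (0:ℝ) < 1 - t)] at hlt; linarith
          have h3 : 1 - t ≤ Real.exp (-n) := by nlinarith
          have term1 : t * Real.logb 2 (1 + Real.exp (-n)) ≤ 2 * Real.exp (-n) := by
            nlinarith [hub1, hlb (-n)]
          have term2 : (1-t) * Real.logb 2 (1 + Real.exp n) ≤ Real.exp (-n) * (1 + 2*n) :=
            mul_le_mul h3 hub2 (hlb n) hen.le
          nlinarith


end LogisticCase
open MeasureTheory Set in
/-- **Estimation error bound under Massart's noise for the quadratic, logistic and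
exponential losses over all measurable functions** (Eq. (9)). -/
theorem massart_linear_bound_all_measurable
    {X : Type*} [MeasurableSpace X] [Nonempty X]
    (β : ℝ) (hβ : β ∈ Ioc (0:ℝ) (1/2))
    (μ : Measure X) [IsProbabilityMeasure μ]
    (η : X → ℝ) (hηmeas : Measurable η) (hη01 : ∀ x, η x ∈ Icc (0:ℝ) 1)
    (hMassart : ∀ᵐ x ∂μ, β ≤ |η x - 1/2|)
    (Φ T : ℝ → ℝ)
    (hcase :
      (Φ = (fun t => if t ≤ 1 then (1 - t)^2 else 0) ∧ T = fun t => t^2) ∨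
      (Φ = (fun t => Real.logb 2 (1 + Real.exp (-t))) ∧
        T = fun t => ((t + 1)/2) * Real.logb 2 (t + 1)
              + ((1 - t)/2) * Real.logb 2 (1 - t)) ∨
      (Φ = (fun t => Real.exp (-t)) ∧ T = fun t => 1 - Real.sqrt (1 - t^2)))
    (hInt01 : ∀ g : X → ℝ, Measurable g → Integrable (condRisk loss01 η g) μ)
    (hIntΦ : ∀ g : X → ℝ, Measurable g → Integrable (condRisk (marginLoss Φ) η g) μ)
    (h : X → ℝ) (hhmeas : Measurable h)
    (hsmall : genErr μ (marginLoss Φ) η h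
        ≤ bestErr μ (marginLoss Φ) η {g : X → ℝ | Measurable g} + T (2 * β)) :
    genErr μ loss01 η h - bestErr μ loss01 η {g : X → ℝ | Measurable g}
      ≤ 2 * β * (genErr μ (marginLoss Φ) η h
          - bestErr μ (marginLoss Φ) η {g : X → ℝ | Measurable g}) / T (2 * β) := by
  obtain ⟨hβ0, hβ2⟩ := hβ
  rcases hcase with ⟨hΦ, hT⟩ | ⟨hΦ, hT⟩ | ⟨hΦ, hT⟩ <;> subst hΦ <;> subst hT
  · exact quad_case β hβ0 hβ2 μ η hηmeas hη01 hMassart hInt01 hIntΦ h hhmeas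
  · exact logistic_case β hβ0 hβ2 μ η hηmeas hη01 hMassart hInt01 hIntΦ h hhmeas
  · exact exp_case β hβ0 hβ2 μ η hηmeas hη01 hMassart hInt01 hIntΦ h hhmeas
end

section
/- H_lin-consistency estimation error bound for the hinge loss: Let Φ_hinge(t)=max{0, 1−t}. Then for every distribution D over X×Y and every h∈H_lin, R_{ℓ_{0-1}}(h) − R*_{ℓ_{0-1},H_lin} ≤ (R_{ℓ_{Φ_hinge}}(h) − R*_{ℓ_{Φ_hinge},H_lin} + M_{ℓ_{Φ_hinge},H_lin})/min{B,1} − M_{ℓ_{0-1},H_lin}. -/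
open MeasureTheory Set
open scoped ENNReal

noncomputable section

/-- Generalization error `R_ℓ(h)` with respect to the input-space set `XS`. -/
def genErrS {X : Type*} [MeasurableSpace X] (μ : Measure X) (XS : Set X)
    (ℓ : (X → ℝ) → X → ℝ → ℝ) (η : X → ℝ) (h : X → ℝ) : ℝ :=
  ∫ x in XS, condRisk ℓ η h x ∂μ

/-- Best-in-class error `R*_{ℓ,H}`. -/
def bestErrS {X : Type*} [MeasurableSpace X] (μ : Measure X) (XS : Set X)
    (ℓ : (X → ℝ) → X → ℝ → ℝ) (η : X → ℝ) (H : Set (X → ℝ)) : ℝ :=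
  sInf ((fun h => genErrS μ XS ℓ η h) '' H)

/-- Minimizability gap `M_{ℓ,H}`. -/
def minGapS {X : Type*} [MeasurableSpace X] (μ : Measure X) (XS : Set X)
    (ℓ : (X → ℝ) → X → ℝ → ℝ) (η : X → ℝ) (H : Set (X → ℝ)) : ℝ :=
  bestErrS μ XS ℓ η H - ∫ x in XS, condRiskStar ℓ η H x ∂μ

/-- `u_h(x) = inf_{‖x−x'‖ ≤ γ} h(x')`. -/
def uInf {E : Type*} [NormedAddCommGroup E] (γ : ℝ) (h : E → ℝ) (x : E) : ℝ :=
  sInf (h '' {x' | ‖x - x'‖ ≤ γ})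

/-- `o_h(x) = sup_{‖x−x'‖ ≤ γ} h(x')`. -/
def oSup {E : Type*} [NormedAddCommGroup E] (γ : ℝ) (h : E → ℝ) (x : E) : ℝ :=
  sSup (h '' {x' | ‖x - x'‖ ≤ γ})

/-- The adversarial zero-one loss `ℓ_γ(h,x,y) = sup_{‖x−x'‖ ≤ γ} 1_{y·h(x') ≤ 0}`. -/
def lossGamma {E : Type*} [NormedAddCommGroup E] (γ : ℝ) (h : E → ℝ) (x : E) (y : ℝ) : ℝ :=
  sSup ((fun x' => if y * h x' ≤ 0 then (1:ℝ) else 0) '' {x' | ‖x - x'‖ ≤ γ})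

/-- The supremum-based loss `Φ̃(h,x,y) = sup_{‖x−x'‖ ≤ γ} Φ(y·h(x'))`. -/
def supLoss {E : Type*} [NormedAddCommGroup E] (γ : ℝ) (Φ : ℝ → ℝ)
    (h : E → ℝ) (x : E) (y : ℝ) : ℝ :=
  sSup ((fun x' => Φ (y * h x')) '' {x' | ‖x - x'‖ ≤ γ})

/-- `H̄_γ(x) = {h ∈ H : u_h(x) ≤ 0 ≤ o_h(x)}`. -/
def Hbar {E : Type*} [NormedAddCommGroup E] (γ : ℝ) (H : Set (E → ℝ)) (x : E) :
    Set (E → ℝ) :=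
  {h ∈ H | uInf γ h x ≤ 0 ∧ 0 ≤ oSup γ h x}

/-- A hypothesis set is symmetric when it is closed under negation. -/
def IsSymmetricHyp {E : Type*} (H : Set (E → ℝ)) : Prop :=
  ∀ h : E → ℝ, h ∈ H ↔ (fun x => -(h x)) ∈ H

end

noncomputable section

/-- The linear hypothesis set `H_lin = {x ↦ w·x + b : ‖w‖_q ≤ W, |b| ≤ B}`. -/
def linHyp (d : ℕ) (p q : ℝ≥0∞) [Fact (1 ≤ q)] (W B : ℝ) :
    Set (PiLp p (fun _ : Fin d => ℝ) → ℝ) :=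
  {h | ∃ (w : PiLp q (fun _ : Fin d => ℝ)) (b : ℝ), ‖w‖ ≤ W ∧ |b| ≤ B ∧
    h = fun x => (∑ i, w i * x i) + b}

end


open MeasureTheory Set in
private lemma hinge_pointwise_key {d : ℕ} {p q : ℝ≥0∞} [Fact (1 ≤ q)]
    (W B : ℝ) (hW : 0 ≤ W) (hB : 0 < B)
    (η : PiLp p (fun _ : Fin d => ℝ) → ℝ) (hη01 : ∀ x, η x ∈ Icc (0:ℝ) 1)
    (h : PiLp p (fun _ : Fin d => ℝ) → ℝ) (hh : h ∈ linHyp d p q W B)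
    (x : PiLp p (fun _ : Fin d => ℝ)) :
    condRisk loss01 η h x - condRiskStar loss01 η (linHyp d p q W B) x
      ≤ (condRisk (marginLoss fun t => max 0 (1 - t)) η h x
          - condRiskStar (marginLoss fun t => max 0 (1 - t)) η (linHyp d p q W B) x)
        / min B 1 := by
  set c := min B 1 with hcdef
  have hc : 0 < c := lt_min hB one_pos
  have hc1 : c ≤ 1 := min_le_right _ _
  have hcB : c ≤ B := min_le_left _ _
  obtain ⟨ht0, ht1⟩ := hη01 x
  set t := η x with htdef
  -- constant hypotheses belong to linHyp
  have hconst : ∀ b : ℝ, |b| ≤ B →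
      (fun y : PiLp p (fun _ : Fin d => ℝ) =>
        (∑ i, (0 : PiLp q (fun _ : Fin d => ℝ)) i * y i) + b) ∈ linHyp d p q W B := by
    intro b hb
    exact ⟨0, b, by simpa using hW, hb, rfl⟩
  have hconst_val : ∀ (b : ℝ) (y : PiLp p (fun _ : Fin d => ℝ)),
      (∑ i, (0 : PiLp q (fun _ : Fin d => ℝ)) i * y i) + b = b := by
    intro b y
    simp
  -- value of the 0-1 conditional risk
  have hC01 : ∀ g : PiLp p (fun _ : Fin d => ℝ) → ℝ,
      condRisk loss01 η g x = if 0 ≤ g x then 1 - t else t := by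
    intro g
    by_cases hg : 0 ≤ g x <;>
      simp [condRisk, condRiskT, loss01, sgn, hg] <;>
      norm_num [htdef]
  -- value of the hinge conditional risk
  have hCΦ : ∀ g : PiLp p (fun _ : Fin d => ℝ) → ℝ,
      condRisk (marginLoss fun s => max 0 (1 - s)) η g x
        = t * max 0 (1 - g x) + (1 - t) * max 0 (1 + g x) := by
    intro g
    simp [condRisk, condRiskT, marginLoss, sub_neg_eq_add, htdef]
  have hbdd01 : BddBelow ((fun g => condRisk loss01 η g x) '' linHyp d p q W B) := by
    refine ⟨min t (1 - t), ?_⟩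
    rintro v ⟨g, hg, rfl⟩
    simp only [hC01]
    split_ifs
    · exact min_le_right _ _
    · exact min_le_left _ _
  have hval01 : ∀ b : ℝ, |b| ≤ B →
      (if (0:ℝ) ≤ b then 1 - t else t)
        ∈ (fun g => condRisk loss01 η g x) '' linHyp d p q W B := by
    intro b hb
    refine ⟨_, hconst b hb, ?_⟩
    simp only [hC01, hconst_val]
  have hstar01 : condRiskStar loss01 η (linHyp d p q W B) x = min t (1 - t) := by
    refine le_antisymm (le_min ?_ ?_) ?_
    · have := hval01 (-B) (by rw [abs_neg, abs_of_pos hB])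
      rw [if_neg (by linarith : ¬ (0:ℝ) ≤ -B)] at this
      exact csInf_le hbdd01 this
    · have := hval01 B (by rw [abs_of_pos hB])
      rw [if_pos hB.le] at this
      exact csInf_le hbdd01 this
    · refine le_csInf (⟨_, hval01 B (by rw [abs_of_pos hB])⟩) ?_
      rintro v ⟨g, hg, rfl⟩
      simp only [hC01]
      split_ifs
      · exact min_le_right _ _
      · exact min_le_left _ _
  have hbddΦ : BddBelow ((fun g =>
      condRisk (marginLoss fun s => max 0 (1 - s)) η g x) '' linHyp d p q W B) := by
    refine ⟨0, ?_⟩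
    rintro v ⟨g, hg, rfl⟩
    simp only [hCΦ]
    have := le_max_left (0:ℝ) (1 - g x)
    have := le_max_left (0:ℝ) (1 + g x)
    nlinarith
  have hstarΦ_le : ∀ b : ℝ, |b| ≤ B →
      condRiskStar (marginLoss fun s => max 0 (1 - s)) η (linHyp d p q W B) x
        ≤ t * max 0 (1 - b) + (1 - t) * max 0 (1 + b) := by
    intro b hb
    refine csInf_le hbddΦ ⟨_, hconst b hb, ?_⟩
    simp only [hCΦ, hconst_val]
  have hstarΦ_le_h : condRiskStar (marginLoss fun s => max 0 (1 - s)) η (linHyp d p q W B) x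
      ≤ condRisk (marginLoss fun s => max 0 (1 - s)) η h x :=
    csInf_le hbddΦ ⟨h, hh, rfl⟩
  rw [le_div_iff₀ hc, hstar01, hC01 h, hCΦ h]
  set S := condRiskStar (marginLoss fun s => max 0 (1 - s)) η (linHyp d p q W B) x with hS
  have m1 : 1 - h x ≤ max 0 (1 - h x) := le_max_right _ _
  have m2 : 1 + h x ≤ max 0 (1 + h x) := le_max_right _ _
  have m3 : (0:ℝ) ≤ max 0 (1 - h x) := le_max_left _ _
  have m4 : (0:ℝ) ≤ max 0 (1 + h x) := le_max_left _ _
  have p1 : t * (1 - h x) ≤ t * max 0 (1 - h x) := mul_le_mul_of_nonneg_left m1 ht0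
  have p2 : (1 - t) * (1 + h x) ≤ (1 - t) * max 0 (1 + h x) :=
    mul_le_mul_of_nonneg_left m2 (by linarith)
  by_cases hhx : 0 ≤ h x
  · rw [if_pos hhx]
    by_cases htt : t ≤ 1 - t
    · rw [min_eq_left htt]
      have hS1 : S ≤ t * (1 + c) + (1 - t) * (1 - c) := by
        have h' := hstarΦ_le (-c) (by rw [abs_neg, abs_of_pos hc]; exact hcB)
        have e1 : (0:ℝ) ⊔ (1 - -c) = 1 + c := by
          rw [max_eq_right (by linarith)]; ring
        have e2 : (0:ℝ) ⊔ (1 + -c) = 1 - c := by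
          rw [max_eq_right (by linarith)]; ring
        rwa [e1, e2] at h' 
      nlinarith [mul_nonneg hhx (by linarith : (0:ℝ) ≤ 1 - 2 * t)]
    · rw [min_eq_right (by linarith)]
      have hE : 0 ≤ t * max 0 (1 - h x) + (1 - t) * max 0 (1 + h x) - S := by
        have := hstarΦ_le_h
        rw [hCΦ h] at this
        linarith
      nlinarith
  · rw [if_neg hhx]
    push_neg at hhx
    by_cases htt : 1 - t ≤ t
    · rw [min_eq_right htt]
      have hS1 : S ≤ t * (1 - c) + (1 - t) * (1 + c) := by
        have h' := hstarΦ_le c (by rw [abs_of_pos hc]; exact hcB)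
        have e1 : (0:ℝ) ⊔ (1 - c) = 1 - c := max_eq_right (by linarith)
        have e2 : (0:ℝ) ⊔ (1 + c) = 1 + c := max_eq_right (by linarith)
        rwa [e1, e2] at h' 
      nlinarith [mul_nonneg (by linarith : (0:ℝ) ≤ -h x) (by linarith : (0:ℝ) ≤ 2 * t - 1)]
    · rw [min_eq_left (by linarith)]
      have hE : 0 ≤ t * max 0 (1 - h x) + (1 - t) * max 0 (1 + h x) - S := by
        have := hstarΦ_le_h
        rw [hCΦ h] at this
        linarith
      nlinarith

open MeasureTheory Set in
/-- **H_lin-consistency estimation error bound for the hinge loss** (Eq. (eq:hinge-lin-est)). -/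
theorem hinge_linear_consistency_estimation_bound
    {d : ℕ} {p q : ℝ≥0∞} [Fact (1 ≤ p)] [Fact (1 ≤ q)] (hpq : 1/p + 1/q = 1)
    [MeasurableSpace (PiLp p (fun _ : Fin d => ℝ))]
    [BorelSpace (PiLp p (fun _ : Fin d => ℝ))]
    (W B : ℝ) (hW : 0 < W) (hB : 0 < B)
    (μ : Measure (PiLp p (fun _ : Fin d => ℝ))) [IsProbabilityMeasure μ]
    (hμXS : μ {x : PiLp p (fun _ : Fin d => ℝ) | ‖x‖ ≤ 1} = 1)
    (η : PiLp p (fun _ : Fin d => ℝ) → ℝ) (hηmeas : Measurable η)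
    (hη01 : ∀ x, η x ∈ Icc (0:ℝ) 1)
    (hInt01 : ∀ g ∈ linHyp d p q W B,
      IntegrableOn (condRisk loss01 η g) {x | ‖x‖ ≤ 1} μ)
    (hIntΦ : ∀ g ∈ linHyp d p q W B,
      IntegrableOn (condRisk (marginLoss fun t => max 0 (1 - t)) η g) {x | ‖x‖ ≤ 1} μ)
    (hIntS01 : IntegrableOn (condRiskStar loss01 η (linHyp d p q W B)) {x | ‖x‖ ≤ 1} μ)
    (hIntSΦ : IntegrableOn
      (condRiskStar (marginLoss fun t => max 0 (1 - t)) η (linHyp d p q W B))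
      {x | ‖x‖ ≤ 1} μ)
    (h : PiLp p (fun _ : Fin d => ℝ) → ℝ) (hh : h ∈ linHyp d p q W B) :
    genErrS μ {x | ‖x‖ ≤ 1} loss01 η h
        - bestErrS μ {x | ‖x‖ ≤ 1} loss01 η (linHyp d p q W B)
      ≤ (genErrS μ {x | ‖x‖ ≤ 1} (marginLoss fun t => max 0 (1 - t)) η h
          - bestErrS μ {x | ‖x‖ ≤ 1} (marginLoss fun t => max 0 (1 - t)) η (linHyp d p q W B)
          + minGapS μ {x | ‖x‖ ≤ 1} (marginLoss fun t => max 0 (1 - t)) η (linHyp d p q W B))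
          / min B 1
        - minGapS μ {x | ‖x‖ ≤ 1} loss01 η (linHyp d p q W B) := by
  classical
  set c := min B 1 with hcdef
  have hc : 0 < c := lt_min hB one_pos
  set H := linHyp d p q W B with hHdef
  set XS : Set (PiLp p (fun _ : Fin d => ℝ)) := {x | ‖x‖ ≤ 1} with hXS
  set Φℓ := marginLoss fun t : ℝ => max 0 (1 - t) with hΦℓ
  have key : ∀ x, condRisk loss01 η h x - condRiskStar loss01 η H x
      ≤ (condRisk Φℓ η h x - condRiskStar Φℓ η H x) / c :=
    hinge_pointwise_key W B hW.le hB η hη01 h hh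
  have i1 : Integrable (fun x => condRisk loss01 η h x - condRiskStar loss01 η H x)
      (μ.restrict XS) := (hInt01 h hh).sub hIntS01
  have i2 : Integrable (fun x => (condRisk Φℓ η h x - condRiskStar Φℓ η H x) / c)
      (μ.restrict XS) := ((hIntΦ h hh).sub hIntSΦ).div_const c
  have hint : ∫ x in XS, (condRisk loss01 η h x - condRiskStar loss01 η H x) ∂μ
      ≤ ∫ x in XS, (condRisk Φℓ η h x - condRiskStar Φℓ η H x) / c ∂μ :=
    integral_mono i1 i2 key
  have e1 : ∫ x in XS, (condRisk loss01 η h x - condRiskStar loss01 η H x) ∂μ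
      = genErrS μ XS loss01 η h - ∫ x in XS, condRiskStar loss01 η H x ∂μ := by
    rw [integral_sub (hInt01 h hh) hIntS01]; rfl
  have e2 : ∫ x in XS, (condRisk Φℓ η h x - condRiskStar Φℓ η H x) / c ∂μ
      = (genErrS μ XS Φℓ η h - ∫ x in XS, condRiskStar Φℓ η H x ∂μ) / c := by
    rw [integral_div, integral_sub (hIntΦ h hh) hIntSΦ]; rfl
  rw [e1, e2] at hint
  simp only [minGapS]
  have expand : (genErrS μ XS Φℓ η h - bestErrS μ XS Φℓ η H
      + (bestErrS μ XS Φℓ η H - ∫ x in XS, condRiskStar Φℓ η H x ∂μ)) / c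
      = (genErrS μ XS Φℓ η h - ∫ x in XS, condRiskStar Φℓ η H x ∂μ) / c := by
    ring
  linarith [hint, expand]
end
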